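/- Let p be prime, r ≥ s ≥ 1, m ≥ 1 with p^r > m p^s − m. Then every sequence of p^r + m p^s − m elements of ℤ/p^sℤ contains a subsequence of length exactly p^r on which the m-th elementary symmetric polynomial vanishes mod p^s. That is, EGZ_{p^r}^{(m)}(ℤ_{p^s}) ≤ p^r + m p^s − m. -/

import Mathlib

open Finset

/-- The `m`-th elementary symmetric expression of the subsequence of `g` selected
by the index set `J`. -/
def eSym {n : ℕ} {R : Type*} [CommRing R] (m : ℕ) (g : Fin n → R) (J : Finset (Fin n)) : R :=
  ∑ T ∈ J.powersetCard m, ∏ i ∈ T, g i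

/-!
Boolean Schauz–Brink argument. Identify `S ⊆ ι` with its indicator vector `x ∈ {0,1}^ι`.
Let `E_j(S)` be natural numbers vanishing at `∅` and given by polynomials of degree `d_j`
in `x`, let `q_j = p ^ v_j`, and put `G(S) = ∏ⱼ C(E_j(S) + q_j - 1, q_j - 1)`. Then
`G(∅) = 1`, and `p ∣ G(S)` unless `q_j ∣ E_j(S)` for every `j`. Over `ℚ`, `G` is a polynomial
in `x` of degree `∑ⱼ (q_j - 1) d_j`; when this is `< |ι|` the alternating sum
`∑_S (-1)^|S| G(S)` vanishes, and reducing it mod `p` shows that some `S ≠ ∅` satisfies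
`q_j ∣ E_j(S)` for all `j`.

For `E_0 = e_m` modulo `p ^ s` and `E_1 = |S|` modulo `p ^ r` on the first
`p ^ r + m p ^ s - m` terms this yields `S ≠ ∅` with `p ^ r ∣ |S| < 2 p ^ r`, so `|S| = p ^ r`.
-/

open scoped Polynomial

/-- Uses `a · C(a + q - 1, q - 1) = q · C(a + q - 1, q)` for `q = p ^ v`. -/
lemma Nat.pow_dvd_of_not_dvd_choose {p v a : ℕ} (hp : p.Prime)
    (h : ¬ p ∣ (a + (p ^ v - 1)).choose (p ^ v - 1)) : p ^ v ∣ a := by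
  have hq : p ^ v - 1 + 1 = p ^ v := Nat.sub_add_cancel (Nat.one_le_pow _ _ hp.pos)
  have key := Nat.choose_succ_right_eq (a + (p ^ v - 1)) (p ^ v - 1)
  rw [hq, Nat.add_sub_cancel] at key
  exact ((hp.coprime_iff_not_dvd.mpr h).pow_left v).dvd_of_dvd_mul_left
    ⟨_, key.symm.trans (mul_comm _ _)⟩

namespace BoolCube

variable {R ι : Type*} [CommRing R] [DecidableEq ι]

/-- The monomial `∏_{i ∈ D} x_i` evaluated at the indicator vector of `S`. -/
def supsetIndicator (D : Finset ι) : Finset ι → R := fun S => if D ⊆ S then 1 else 0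

/-- Functions on the Boolean cube given by a polynomial of degree at most `k`. -/
def degreeLE (R ι : Type*) [CommRing R] [DecidableEq ι] (k : ℕ) : Submodule R (Finset ι → R) :=
  Submodule.span R (supsetIndicator '' {D | D.card ≤ k})

lemma supsetIndicator_mem_degreeLE {D : Finset ι} {k : ℕ} (hD : D.card ≤ k) :
    (supsetIndicator D : Finset ι → R) ∈ degreeLE R ι k :=
  Submodule.subset_span ⟨D, hD, rfl⟩

lemma degreeLE_mono : Monotone (degreeLE R ι) := fun _ _ hkl =>
  Submodule.span_mono <| Set.image_mono fun _ hD => le_trans hD hkl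

lemma one_mem_degreeLE (k : ℕ) : (1 : Finset ι → R) ∈ degreeLE R ι k := by
  convert supsetIndicator_mem_degreeLE (R := R) (D := ∅) (Nat.zero_le k) using 1
  ext S
  simp [supsetIndicator]

lemma supsetIndicator_mul_supsetIndicator (D E : Finset ι) :
    (supsetIndicator D * supsetIndicator E : Finset ι → R) = supsetIndicator (D ∪ E) := by
  ext S
  by_cases hD : D ⊆ S <;> by_cases hE : E ⊆ S <;> simp [supsetIndicator, union_subset_iff, hD, hE]

lemma degreeLE_mul_le (k l : ℕ) : degreeLE R ι k * degreeLE R ι l ≤ degreeLE R ι (k + l) := by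
  rw [degreeLE, degreeLE, Submodule.span_mul_span]
  refine Submodule.span_mono ?_
  rintro _ ⟨_, ⟨D, hD, rfl⟩, _, ⟨E, hE, rfl⟩, rfl⟩
  exact ⟨D ∪ E, (card_union_le D E).trans (add_le_add hD hE),
    (supsetIndicator_mul_supsetIndicator D E).symm⟩

lemma mul_mem_degreeLE {F G : Finset ι → R} {k l : ℕ} (hF : F ∈ degreeLE R ι k)
    (hG : G ∈ degreeLE R ι l) : F * G ∈ degreeLE R ι (k + l) :=
  degreeLE_mul_le k l (Submodule.mul_mem_mul hF hG)

lemma prod_mem_degreeLE {κ : Type*} (t : Finset κ) {F : κ → Finset ι → R} {k : κ → ℕ}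
    (hF : ∀ j ∈ t, F j ∈ degreeLE R ι (k j)) :
    ∏ j ∈ t, F j ∈ degreeLE R ι (∑ j ∈ t, k j) := by
  classical
  induction t using Finset.induction_on with
  | empty => exact one_mem_degreeLE 0
  | insert j t hj ih =>
    rw [prod_insert hj, sum_insert hj]
    exact mul_mem_degreeLE (hF j (mem_insert_self j t))
      (ih fun i hi => hF i (mem_insert_of_mem hi))

lemma pow_mem_degreeLE {F : Finset ι → R} {k : ℕ} (hF : F ∈ degreeLE R ι k) (i : ℕ) :
    F ^ i ∈ degreeLE R ι (i * k) := by
  simpa using prod_mem_degreeLE (range i) fun _ _ => hF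

lemma eval_mem_degreeLE {F : Finset ι → R} {k : ℕ} (hF : F ∈ degreeLE R ι k) (P : R[X]) :
    (fun S => P.eval (F S)) ∈ degreeLE R ι (P.natDegree * k) := by
  have hP : (fun S => P.eval (F S)) = ∑ i ∈ range (P.natDegree + 1), P.coeff i • F ^ i := by
    ext S
    simp [Polynomial.eval_eq_sum_range, Finset.sum_apply]
  rw [hP]
  refine Submodule.sum_mem _ fun i hi => Submodule.smul_mem _ _ ?_
  exact degreeLE_mono (Nat.mul_le_mul_right k (Nat.lt_succ_iff.mp (mem_range.mp hi)))
    (pow_mem_degreeLE hF i)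

lemma choose_add_mem_degreeLE {E : Finset ι → ℕ} {d : ℕ}
    (hE : (fun S => (E S : ℚ)) ∈ degreeLE ℚ ι d) (k : ℕ) :
    (fun S => ((E S + k).choose k : ℚ)) ∈ degreeLE ℚ ι (k * d) := by
  have h := eval_mem_degreeLE hE (Polynomial.preHilbertPoly ℚ k 0)
  rw [Polynomial.natDegree_preHilbertPoly] at h
  convert h using 2 with S
  rw [Polynomial.preHilbertPoly_eq_choose_sub_add ℚ k (Nat.zero_le _), Nat.sub_zero]

variable [Fintype ι]

lemma card_mem_degreeLE : (fun S : Finset ι => (S.card : R)) ∈ degreeLE R ι 1 := by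
  have h : (fun S : Finset ι => (S.card : R)) = ∑ i, supsetIndicator {i} := by
    ext S
    simp [supsetIndicator, Finset.sum_apply]
  rw [h]
  exact Submodule.sum_mem _ fun i _ => supsetIndicator_mem_degreeLE (card_singleton i).le

lemma sum_neg_one_pow_card_mul_supsetIndicator {D : Finset ι} (hD : D ≠ univ) :
    ∑ S, (-1 : R) ^ S.card * supsetIndicator D S = 0 := by
  obtain ⟨i, -, hi⟩ := exists_of_ssubset (ssubset_univ_iff.mpr hD)
  rw [← powerset_univ, ← insert_erase (mem_univ i),
    sum_powerset_insert (notMem_erase i univ), ← sum_add_distrib]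
  refine sum_eq_zero fun S hS => ?_
  have hiS : i ∉ S := fun h => notMem_erase i univ (mem_powerset.mp hS h)
  by_cases hDS : D ⊆ S <;>
    simp [supsetIndicator, card_insert_of_notMem hiS, subset_insert_iff_of_notMem hi, hDS, pow_succ]

lemma sum_neg_one_pow_card_mul_eq_zero {F : Finset ι → R} {k : ℕ} (hF : F ∈ degreeLE R ι k)
    (hk : k < Fintype.card ι) : ∑ S, (-1 : R) ^ S.card * F S = 0 := by
  induction hF using Submodule.span_induction with
  | mem _ hD =>
    obtain ⟨D, hD, rfl⟩ := hD
    refine sum_neg_one_pow_card_mul_supsetIndicator fun h => ?_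
    rw [Set.mem_ofPred_eq, h, card_univ] at hD
    omega
  | zero => simp
  | add F G _ _ hF hG => simp [mul_add, sum_add_distrib, hF, hG]
  | smul c F _ hF => simp [mul_left_comm _ c, ← mul_sum, hF]

theorem exists_nonempty_forall_pow_dvd {κ : Type*} [Fintype κ] {p : ℕ} (hp : p.Prime)
    (E : κ → Finset ι → ℕ) (d v : κ → ℕ)
    (hE : ∀ j, (fun S => (E j S : ℚ)) ∈ degreeLE ℚ ι (d j)) (hE₀ : ∀ j, E j ∅ = 0)
    (hdeg : ∑ j, (p ^ v j - 1) * d j < Fintype.card ι) :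
    ∃ S : Finset ι, S.Nonempty ∧ ∀ j, p ^ v j ∣ E j S := by
  have : Fact p.Prime := ⟨hp⟩
  set G : Finset ι → ℕ := fun S => ∏ j, (E j S + (p ^ v j - 1)).choose (p ^ v j - 1)
  have hG : (fun S => (G S : ℚ)) ∈ degreeLE ℚ ι (∑ j, (p ^ v j - 1) * d j) := by
    convert prod_mem_degreeLE univ fun j _ => choose_add_mem_degreeLE (hE j) (p ^ v j - 1) using 1
    ext S
    simp [G]
  have hsum : ∑ S, (-1 : ℤ) ^ S.card * G S = 0 := by
    exact_mod_cast sum_neg_one_pow_card_mul_eq_zero hG hdeg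
  by_contra! h
  have hGp : ∀ S ≠ ∅, (G S : ZMod p) = 0 := by
    intro S hS
    obtain ⟨j, hj⟩ := h S (nonempty_iff_ne_empty.mpr hS)
    rw [ZMod.natCast_eq_zero_iff]
    have hpj : p ∣ (E j S + (p ^ v j - 1)).choose (p ^ v j - 1) := by
      by_contra h'
      exact hj (Nat.pow_dvd_of_not_dvd_choose hp h')
    exact hpj.trans (dvd_prod_of_mem _ (mem_univ j))
  have hsum_p := congrArg (Int.cast : ℤ → ZMod p) hsum
  push_cast at hsum_p
  rw [sum_eq_single ∅ (fun S _ hS => by rw [hGp S hS, mul_zero]) (by simp)] at hsum_p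
  simp [G, hE₀] at hsum_p

end BoolCube

lemma eSym_map {k n m : ℕ} {R : Type*} [CommRing R] (g : Fin n → R) (e : Fin k ↪ Fin n)
    (J : Finset (Fin k)) : eSym m g (J.map e) = eSym m (g ∘ e) J := by
  simp [eSym, powersetCard_map]

lemma eSym_natCast {n m : ℕ} {R : Type*} [CommRing R] (a : Fin n → ℕ) (J : Finset (Fin n)) :
    eSym m (fun i => (a i : R)) J = ((∑ T ∈ J.powersetCard m, ∏ i ∈ T, a i : ℕ) : R) := by
  simp only [eSym, Nat.cast_sum, Nat.cast_prod]

lemma eSym_mem_degreeLE {N : ℕ} {R : Type*} [CommRing R] (m : ℕ) (b : Fin N → R) :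
    (fun S => eSym m b S) ∈ BoolCube.degreeLE R (Fin N) m := by
  have h : (fun S => eSym m b S)
      = ∑ T ∈ univ.powersetCard m, (∏ i ∈ T, b i) • BoolCube.supsetIndicator T := by
    ext S
    simp only [eSym, Finset.sum_apply, Pi.smul_apply, smul_eq_mul, BoolCube.supsetIndicator,
      mul_ite, mul_one, mul_zero, ← sum_filter]
    congr 1
    ext T
    simp [mem_powersetCard, and_comm]
  rw [h]
  exact Submodule.sum_mem _ fun T hT => Submodule.smul_mem _ _
    (BoolCube.supsetIndicator_mem_degreeLE (mem_powersetCard.mp hT).2.le)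

theorem exists_card_eq_eSym_eq_zero {p : ℕ} (hp : p.Prime) {r s m N : ℕ} (hm : 1 ≤ m)
    (hN : (p ^ s - 1) * m + (p ^ r - 1) < N) (hN' : N < 2 * p ^ r) (g : Fin N → ZMod (p ^ s)) :
    ∃ S, S.card = p ^ r ∧ eSym m g S = 0 := by
  have : NeZero (p ^ s) := ⟨pow_ne_zero s hp.ne_zero⟩
  let a : Fin N → ℕ := fun i => (g i).val
  let E : Fin 2 → Finset (Fin N) → ℕ := ![fun S => ∑ T ∈ S.powersetCard m, ∏ i ∈ T, a i, card]
  have hE : ∀ j, (fun S => (E j S : ℚ)) ∈ BoolCube.degreeLE ℚ (Fin N) (![m, 1] j) := by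
    refine Fin.forall_fin_two.mpr ⟨?_, BoolCube.card_mem_degreeLE⟩
    convert eSym_mem_degreeLE m (fun i => (a i : ℚ)) using 1
    · rfl
    · exact funext fun S => (eSym_natCast a S).symm
  have hE₀ : ∀ j, E j ∅ = 0 := by
    refine Fin.forall_fin_two.mpr ⟨?_, rfl⟩
    change ∑ T ∈ (∅ : Finset (Fin N)).powersetCard m, ∏ i ∈ T, a i = 0
    rw [powersetCard_eq_empty.mpr hm, sum_empty]
  obtain ⟨S, hS, hdvd⟩ := BoolCube.exists_nonempty_forall_pow_dvd hp E ![m, 1] ![s, r] hE hE₀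
    (by simpa using hN)
  refine ⟨S, Nat.eq_of_dvd_of_lt_two_mul hS.card_pos.ne' (hdvd 1) ?_, ?_⟩
  · exact (card_le_univ S).trans_lt (by simpa using hN')
  · calc eSym m g S = eSym m (fun i => (a i : ZMod (p ^ s))) S := by simp [a]
      _ = (E 0 S : ZMod (p ^ s)) := eSym_natCast a S
      _ = 0 := (ZMod.natCast_eq_zero_iff _ _).mpr (hdvd 0)

theorem stmt_11_general (p : ℕ) (hp : p.Prime) (r s m : ℕ) (hm : 1 ≤ m)
    (hbig : m * p ^ s - m < p ^ r) (n : ℕ) (hn : p ^ r + m * p ^ s - m ≤ n)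
    (g : Fin n → ZMod (p ^ s)) :
    ∃ J : Finset (Fin n), J.card = p ^ r ∧ eSym m g J = 0 := by
  have hpr : 1 ≤ p ^ r := Nat.one_le_pow _ _ hp.pos
  have hmps : m ≤ m * p ^ s := Nat.le_mul_of_pos_right m (Nat.pow_pos hp.pos)
  have hsub : (p ^ s - 1) * m = m * p ^ s - m := by rw [Nat.sub_mul, one_mul, mul_comm]
  obtain ⟨S, hS, hS₀⟩ := exists_card_eq_eSym_eq_zero (r := r) (N := p ^ r + m * p ^ s - m) hp hm
    (by omega) (by omega) (g ∘ Fin.castLEEmb hn)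
  exact ⟨S.map (Fin.castLEEmb hn), by rw [card_map, hS], by rw [eSym_map]; exact hS₀⟩

theorem stmt_11 (p : ℕ) (hp : p.Prime) (r s m : ℕ) (hs : 1 ≤ s) (hsr : s ≤ r) (hm : 1 ≤ m)
    (hbig : m * p ^ s - m < p ^ r) (n : ℕ) (hn : p ^ r + m * p ^ s - m ≤ n)
    (g : Fin n → ZMod (p ^ s)) :
    ∃ J : Finset (Fin n), J.card = p ^ r ∧ eSym m g J = 0 :=
  stmt_11_general p hp r s m hm hbig n hn g
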